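/- Fix 0 < R < 1 and 0 < λ ≤ (1−R) (so that 2λ/(1−R+λ) ≤ 1), and set ρ = (1−R+λ)·H⁻¹(2λ/(1−R+λ)), where H⁻¹ : [0,1] → [0,1/2] is the inverse of the binary entropy function restricted to [0,1/2]. For each n define N_n = C(⌊n(1−R+λ)/2⌋, ⌊ρn/2⌋)² / 2^{⌊λn⌋} and T_n = C(⌊n(1−R+λ)/2⌋, ⌊ρn/2⌋) + N_n. Then lim_{n→∞} (1/n)·log₂ N_n = λ and lim_{n→∞} (1/n)·log₂ T_n = λ; in particular T_n/N_n is subexponential in n, i.e. the fusion algorithm outputs its parity-check equations in amortized time Õ(1). -/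

import Mathlib

/-!
By Stirling's formula `log j! = j log j - j + o(j)`, so if `m n / n → α` and `k n / n → β` with
`0 < β < α`, then `log (m n choose k n) / n → α · H(β/α)` (entropy in nats). For
`α = (1 - R + λ)/2` and `β/α = x` the choice of `x` makes this limit exactly `λ log 2`; hence
`N n = C² / 2^⌊λn⌋` has exponent `2λ - λ = λ`, and `T n = C + N n`, which lies between `N n` and
`2 max (C, N n)`, has exponent `λ` as well.
-/

open Filter Topology

/-- The binary entropy function `H(x) = −x log₂ x − (1−x) log₂ (1−x)`. -/
noncomputable def binH (x : ℝ) : ℝ :=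
  -x * Real.logb 2 x - (1 - x) * Real.logb 2 (1 - x)

open Real
open scoped Nat

noncomputable def stirlingRemainder (j : ℕ) : ℝ := log j ! - (j * log j - j)

lemma stirlingRemainder_eq_log_stirlingSeq {j : ℕ} (hj : j ≠ 0) :
    stirlingRemainder j = log (Stirling.stirlingSeq j) + log (2 * j) / 2 := by
  rw [stirlingRemainder, Stirling.log_stirlingSeq_formula,
    log_div (by positivity) (exp_ne_zero 1), log_exp]
  ring

lemma tendsto_stirlingRemainder_div :
    Tendsto (fun j : ℕ => stirlingRemainder j / j) atTop (𝓝 0) := by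
  have hseq : Tendsto (fun j : ℕ => log (Stirling.stirlingSeq j) / j) atTop (𝓝 0) :=
    ((continuousAt_log (by positivity)).tendsto.comp
      Stirling.tendsto_stirlingSeq_sqrt_pi).div_atTop tendsto_natCast_atTop_atTop
  have hlog : Tendsto (fun j : ℕ => log (2 * j) / 2 / j) atTop (𝓝 0) := by
    have h := (tendsto_pow_log_div_mul_add_atTop 1 0 1 one_ne_zero).comp
      (tendsto_natCast_atTop_atTop.const_mul_atTop (zero_lt_two' ℝ))
    convert h using 2 with j
    simp only [Function.comp_apply, pow_one, one_mul, add_zero]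
    ring
  refine (zero_add (0 : ℝ) ▸ hseq.add hlog).congr' ?_
  filter_upwards [eventually_ne_atTop 0] with j hj
  rw [stirlingRemainder_eq_log_stirlingSeq hj, add_div]

lemma tendsto_stirlingRemainder_comp_div {a : ℕ → ℕ} {c : ℝ} (hc : 0 < c)
    (ha : Tendsto (fun n : ℕ => (a n : ℝ) / n) atTop (𝓝 c)) :
    Tendsto (fun n : ℕ => stirlingRemainder (a n) / n) atTop (𝓝 0) := by
  have ha_top : Tendsto a atTop atTop := by
    rw [← tendsto_natCast_atTop_iff (R := ℝ)]
    refine (ha.pos_mul_atTop hc tendsto_natCast_atTop_atTop).congr' ?_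
    filter_upwards [eventually_ne_atTop 0] with n hn
    field_simp
  refine (zero_mul c ▸ (tendsto_stirlingRemainder_div.comp ha_top).mul ha).congr' ?_
  filter_upwards [eventually_ne_atTop 0] with n hn
  rcases eq_or_ne (a n) 0 with h | h
  · simp [h, stirlingRemainder]
  · simp only [Function.comp_apply]
    field_simp

lemma log_choose_div_eq {m k n : ℕ} (hkm : k ≤ m) (hn : n ≠ 0) :
    log (m.choose k) / n =
      (stirlingRemainder m - stirlingRemainder k - stirlingRemainder (m - k)) / n +
        (negMulLog (k / n) + negMulLog ((m - k : ℕ) / n) - negMulLog (m / n)) := by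
  have hfac : (m.choose k : ℝ) * k ! * (m - k)! = m ! := by
    exact_mod_cast Nat.choose_mul_factorial_mul_factorial hkm
  have hchoose : (m.choose k : ℝ) ≠ 0 := by exact_mod_cast (Nat.choose_pos hkm).ne'
  have hlog : log (m.choose k) = log m ! - log k ! - log (m - k)! := by
    rw [← hfac, log_mul (by positivity) (by positivity), log_mul hchoose (by positivity)]
    ring
  -- the `negMulLog n` terms produced by rescaling cancel because `k + (m - k) = m`
  have hscale (a : ℕ) : negMulLog (a / n) = (negMulLog a - a / n * negMulLog n) / n := by
    have := negMulLog_mul (n : ℝ) (a / n)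
    rw [mul_div_cancel₀ _ (by positivity)] at this
    rw [eq_div_iff (by positivity)]
    linarith
  rw [hlog, hscale, hscale, hscale]
  simp only [stirlingRemainder, negMulLog, Nat.cast_sub hkm]
  field_simp
  ring

lemma mul_binEntropy_div {α : ℝ} (hα : α ≠ 0) (β : ℝ) :
    α * binEntropy (β / α) = negMulLog β + negMulLog (α - β) - negMulLog α := by
  have h1 := negMulLog_mul α (β / α)
  have h2 := negMulLog_mul α (1 - β / α)
  rw [mul_div_cancel₀ _ hα] at h1
  rw [mul_one_sub, mul_div_cancel₀ _ hα] at h2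
  rw [binEntropy_eq_negMulLog_add_negMulLog_one_sub, h1, h2]
  ring

lemma tendsto_log_choose_div {m k : ℕ → ℕ} {α β : ℝ} (hβ : 0 < β) (hβα : β < α)
    (hm : Tendsto (fun n : ℕ => (m n : ℝ) / n) atTop (𝓝 α))
    (hk : Tendsto (fun n : ℕ => (k n : ℝ) / n) atTop (𝓝 β)) (hkm : ∀ n, k n ≤ m n) :
    Tendsto (fun n : ℕ => log ((m n).choose (k n)) / n) atTop
      (𝓝 (α * binEntropy (β / α))) := by
  have hmk : Tendsto (fun n : ℕ => ((m n - k n : ℕ) : ℝ) / n) atTop (𝓝 (α - β)) := by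
    simpa only [Nat.cast_sub (hkm _), sub_div] using hm.sub hk
  have hremainder := ((tendsto_stirlingRemainder_comp_div (hβ.trans hβα) hm).sub
    (tendsto_stirlingRemainder_comp_div hβ hk)).sub
    (tendsto_stirlingRemainder_comp_div (sub_pos.2 hβα) hmk)
  have hmain := ((continuous_negMulLog.tendsto β).comp hk).add
    ((continuous_negMulLog.tendsto (α - β)).comp hmk) |>.sub
    ((continuous_negMulLog.tendsto α).comp hm)
  rw [mul_binEntropy_div (hβ.trans hβα).ne']
  have hsum := hremainder.add hmain
  simp only [sub_zero, zero_add] at hsum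
  refine hsum.congr' ?_
  filter_upwards [eventually_ne_atTop 0] with n hn
  rw [log_choose_div_eq (hkm n) hn, sub_div, sub_div]
  rfl

lemma log_add_le_log_two_add_max {a b : ℝ} (ha : 0 < a) (hb : 0 < b) :
    log (a + b) ≤ log 2 + max (log a) (log b) := by
  rcases le_total a b with hab | hab
  · calc log (a + b) ≤ log (2 * b) := log_le_log (by positivity) (by linarith)
      _ ≤ log 2 + max (log a) (log b) := by
        rw [log_mul two_ne_zero hb.ne']
        exact add_le_add_right (le_max_right _ _) _
  · calc log (a + b) ≤ log (2 * a) := log_le_log (by positivity) (by linarith)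
      _ ≤ log 2 + max (log a) (log b) := by
        rw [log_mul two_ne_zero ha.ne']
        exact add_le_add_right (le_max_left _ _) _

lemma tendsto_log_add_div {a b : ℕ → ℝ} {L : ℝ} (ha : ∀ n, 0 < a n) (hb : ∀ n, 0 < b n)
    (hLa : Tendsto (fun n : ℕ => log (a n) / n) atTop (𝓝 L))
    (hLb : Tendsto (fun n : ℕ => log (b n) / n) atTop (𝓝 L)) :
    Tendsto (fun n : ℕ => log (a n + b n) / n) atTop (𝓝 L) := by
  have hupper : Tendsto (fun n : ℕ => log 2 / n + max (log (a n) / n) (log (b n) / n))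
      atTop (𝓝 L) := by
    simpa using (tendsto_const_nhds.div_atTop tendsto_natCast_atTop_atTop).add (hLa.max hLb)
  refine tendsto_of_tendsto_of_tendsto_of_le_of_le hLb hupper (fun n => ?_) (fun n => ?_)
  · exact div_le_div_of_nonneg_right (log_le_log (hb n) (by linarith [ha n])) n.cast_nonneg
  · rw [max_div_div_right n.cast_nonneg, ← add_div]
    exact div_le_div_of_nonneg_right (log_add_le_log_two_add_max (ha n) (hb n)) n.cast_nonneg

lemma tendsto_one_div_mul_logb {f : ℕ → ℝ} {b L : ℝ} (hb : log b ≠ 0)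
    (hf : Tendsto (fun n : ℕ => log (f n) / n) atTop (𝓝 (L * log b))) :
    Tendsto (fun n : ℕ => 1 / (n : ℝ) * logb b (f n)) atTop (𝓝 L) := by
  convert hf.div_const (log b) using 1
  · ext n
    rw [logb]
    ring
  · rw [mul_div_cancel_right₀ _ hb]

lemma binH_eq_binEntropy_div (x : ℝ) : binH x = binEntropy x / log 2 := by
  simp only [binH, logb, binEntropy_eq_negMulLog_add_negMulLog_one_sub, negMulLog]
  ring

lemma tendsto_nat_floor_mul_div_natCast {a : ℝ} (ha : 0 ≤ a) :
    Tendsto (fun n : ℕ => (⌊a * n⌋₊ : ℝ) / n) atTop (𝓝 a) :=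
  (tendsto_nat_floor_mul_div_atTop ha).comp tendsto_natCast_atTop_atTop

section HalfFloor

variable {c x : ℝ}

lemma floor_mul_half_le_floor_half (hc : 0 ≤ c) (hx : x ≤ 1) (n : ℕ) :
    ⌊c * x * n / 2⌋₊ ≤ ⌊(n : ℝ) * c / 2⌋₊ :=
  Nat.floor_mono <| by
    have := mul_nonneg (mul_nonneg n.cast_nonneg hc) (sub_nonneg.2 hx)
    nlinarith

lemma choose_floor_half_pos (hc : 0 ≤ c) (hx : x ≤ 1) (n : ℕ) :
    0 < (⌊(n : ℝ) * c / 2⌋₊.choose ⌊c * x * n / 2⌋₊ : ℝ) := by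
  exact_mod_cast Nat.choose_pos (floor_mul_half_le_floor_half hc hx n)

lemma tendsto_log_choose_floor_half_div (hc : 0 < c) (hx0 : 0 < x) (hx1 : x < 1) :
    Tendsto (fun n : ℕ => log (⌊(n : ℝ) * c / 2⌋₊.choose ⌊c * x * n / 2⌋₊ : ℝ) / n) atTop
      (𝓝 (c / 2 * binEntropy x)) := by
  have hm : Tendsto (fun n : ℕ => (⌊(n : ℝ) * c / 2⌋₊ : ℝ) / n) atTop (𝓝 (c / 2)) :=
    (tendsto_nat_floor_mul_div_natCast (by positivity)).congr fun n => by ring_nf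
  have hk : Tendsto (fun n : ℕ => (⌊c * x * n / 2⌋₊ : ℝ) / n) atTop (𝓝 (c / 2 * x)) :=
    (tendsto_nat_floor_mul_div_natCast (by positivity)).congr fun n => by ring_nf
  have h := tendsto_log_choose_div (by positivity) (by nlinarith) hm hk
    (floor_mul_half_le_floor_half hc.le hx1.le)
  rwa [mul_div_cancel_left₀ _ (by positivity)] at h

end HalfFloor

lemma tendsto_log_sq_div_two_pow_floor_div {C : ℕ → ℝ} {lam : ℝ} (hC0 : ∀ n, C n ≠ 0)
    (hlam : 0 ≤ lam) (hC : Tendsto (fun n : ℕ => log (C n) / n) atTop (𝓝 (lam * log 2))) :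
    Tendsto (fun n : ℕ => log (C n ^ 2 / 2 ^ ⌊lam * n⌋₊) / n) atTop (𝓝 (lam * log 2)) := by
  have h := (hC.const_mul 2).sub ((tendsto_nat_floor_mul_div_natCast hlam).mul_const (log 2))
  rw [show 2 * (lam * log 2) - lam * log 2 = lam * log 2 by ring] at h
  refine h.congr fun n => ?_
  rw [log_div (pow_ne_zero _ (hC0 n)) (by positivity), log_pow, log_pow]
  ring

lemma tendsto_log_div_div_of_tendsto {a b : ℕ → ℝ} {L : ℝ} (ha : ∀ n, a n ≠ 0)
    (hb : ∀ n, b n ≠ 0) (hLa : Tendsto (fun n : ℕ => log (a n) / n) atTop (𝓝 L))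
    (hLb : Tendsto (fun n : ℕ => log (b n) / n) atTop (𝓝 L)) :
    Tendsto (fun n : ℕ => log (a n / b n) / n) atTop (𝓝 0) := by
  refine (sub_self L ▸ hLa.sub hLb).congr fun n => ?_
  rw [log_div (ha n) (hb n), sub_div]

theorem dumer_fusion_amortized_general (R lam x : ℝ) (hR1 : R < 1)
    (hlam0 : 0 < lam)
    (hx : x ∈ Set.Icc (0 : ℝ) (1 / 2))
    (hHx : binH x = 2 * lam / (1 - R + lam)) :
    let ρ : ℝ := (1 - R + lam) * x
    let N : ℕ → ℝ := fun n =>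
      ((⌊(n : ℝ) * (1 - R + lam) / 2⌋₊.choose ⌊ρ * n / 2⌋₊ : ℝ)) ^ 2 / 2 ^ ⌊lam * n⌋₊
    let T : ℕ → ℝ := fun n =>
      ((⌊(n : ℝ) * (1 - R + lam) / 2⌋₊.choose ⌊ρ * n / 2⌋₊ : ℝ)) + N n
    Filter.Tendsto (fun n : ℕ => (1 / (n : ℝ)) * Real.logb 2 (N n))
        Filter.atTop (nhds lam) ∧
    Filter.Tendsto (fun n : ℕ => (1 / (n : ℝ)) * Real.logb 2 (T n))
        Filter.atTop (nhds lam) ∧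
    Filter.Tendsto (fun n : ℕ => (1 / (n : ℝ)) * Real.logb 2 (T n / N n))
        Filter.atTop (nhds 0) := by
  intro ρ N T
  obtain ⟨hx0, hx_half⟩ := hx
  have hc : 0 < 1 - R + lam := by linarith
  have hlog2 : log 2 ≠ 0 := (log_pos one_lt_two).ne'
  have hx_pos : 0 < x := hx0.lt_of_ne <| by
    rintro rfl
    have : 0 < 2 * lam / (1 - R + lam) := by positivity
    simp [← hHx, binH] at this
  have hentropy : (1 - R + lam) / 2 * binEntropy x = lam * log 2 := by
    rw [← div_mul_cancel₀ (binEntropy x) hlog2, ← binH_eq_binEntropy_div, hHx]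
    field_simp
  have hCpos := choose_floor_half_pos hc.le (hx_half.trans (by norm_num))
  have hC := hentropy ▸ tendsto_log_choose_floor_half_div hc hx_pos (by linarith)
  have hNpos : ∀ n, 0 < N n := fun n => by
    have := hCpos n
    positivity
  have hN : Tendsto (fun n : ℕ => log (N n) / n) atTop (𝓝 (lam * log 2)) :=
    tendsto_log_sq_div_two_pow_floor_div (fun n => (hCpos n).ne') hlam0.le hC
  have hTpos : ∀ n, 0 < T n := fun n => add_pos (hCpos n) (hNpos n)
  have hT : Tendsto (fun n : ℕ => log (T n) / n) atTop (𝓝 (lam * log 2)) :=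
    tendsto_log_add_div hCpos hNpos hC hN
  have hTN := tendsto_log_div_div_of_tendsto (fun n => (hTpos n).ne') (fun n => (hNpos n).ne') hT hN
  exact ⟨tendsto_one_div_mul_logb hlog2 hN, tendsto_one_div_mul_logb hlog2 hT,
    tendsto_one_div_mul_logb hlog2 (by rwa [zero_mul])⟩

/-- with `ρ = (1−R+λ)·H⁻¹(2λ/(1−R+λ))`, both the number `N_n` of
parity checks produced by one Dumer fusion iteration and its cost `T_n` have
exponent `λ`; in particular `T_n/N_n` is subexponential (amortized time `Õ(1)`). -/
theorem dumer_fusion_amortized (R lam x : ℝ) (hR0 : 0 < R) (hR1 : R < 1)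
    (hlam0 : 0 < lam) (hlam : lam ≤ 1 - R)
    (hx : x ∈ Set.Icc (0 : ℝ) (1 / 2))
    (hHx : binH x = 2 * lam / (1 - R + lam)) :
    let ρ : ℝ := (1 - R + lam) * x
    let N : ℕ → ℝ := fun n =>
      ((⌊(n : ℝ) * (1 - R + lam) / 2⌋₊.choose ⌊ρ * n / 2⌋₊ : ℝ)) ^ 2 / 2 ^ ⌊lam * n⌋₊
    let T : ℕ → ℝ := fun n =>
      ((⌊(n : ℝ) * (1 - R + lam) / 2⌋₊.choose ⌊ρ * n / 2⌋₊ : ℝ)) + N n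
    Filter.Tendsto (fun n : ℕ => (1 / (n : ℝ)) * Real.logb 2 (N n))
        Filter.atTop (nhds lam) ∧
    Filter.Tendsto (fun n : ℕ => (1 / (n : ℝ)) * Real.logb 2 (T n))
        Filter.atTop (nhds lam) ∧
    Filter.Tendsto (fun n : ℕ => (1 / (n : ℝ)) * Real.logb 2 (T n / N n))
        Filter.atTop (nhds 0) :=
  dumer_fusion_amortized_general R lam x hR1 hlam0 hx hHx
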